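/- arXiv:2310.11679 — 2 statements merged into one kernel-verified Lean document; each statement's English description precedes it below -/
import Mathlib

section
/- The polynomials R_n(x) defined by R₀(x) = x and R_{n+1}(x) = (6x² − g₂/2)R_n'(x) + (4x³ − g₂x − g₃)R_n''(x) have degree n+1, leading coefficient (2n+1)!, and the coefficient of x^n in R_n is 0. -/
open Polynomial

/-- The polynomials `R_n`: `R₀(x) = x` and
`R_{n+1}(x) = (6x² − g₂/2)R_n'(x) + (4x³ − g₂x − g₃)R_n''(x)`. -/
noncomputable def Rpoly (g2 g3 : ℂ) : ℕ → Polynomial ℂ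
  | 0 => X
  | n + 1 =>
      (6 * X ^ 2 - C (g2 / 2)) * derivative (Rpoly g2 g3 n)
        + (4 * X ^ 3 - C g2 * X - C g3) * derivative (derivative (Rpoly g2 g3 n))

/-!
With `f = 4X³ − g₂X − g₃` the recursion reads `R_{n+1} = f'/2 · R_n' + f · R_n''`, and the
coefficient of `X^(m+1)` in `f'/2 · p' + f · p''` is `2m(2m+1) p_m` plus multiples of `p_{m+2}`
and `p_{m+3}`. So each step raises the degree by one, multiplies the leading coefficient by
`(2n+2)(2n+3)`, turning `(2n+1)!` into `(2n+3)!`, and keeps the coefficient just below the leading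
one zero.
-/
section RpolyStep

variable {K : Type*} [Field K] (g2 g3 : K)

noncomputable def RpolyStep (p : K[X]) : K[X] :=
  (6 * X ^ 2 - C (g2 / 2)) * derivative p
    + (4 * X ^ 3 - C g2 * X - C g3) * derivative (derivative p)

theorem coeff_RpolyStep_succ (p : K[X]) (m : ℕ) :
    (RpolyStep g2 g3 p).coeff (m + 1) =
      2 * m * (2 * m + 1) * p.coeff m - (m + 2) * (g2 / 2 + g2 * (m + 1)) * p.coeff (m + 2)
        - g3 * (m + 2) * (m + 3) * p.coeff (m + 3) := by
  have hexpand : RpolyStep g2 g3 p = C 6 * (X ^ 2 * derivative p) - C (g2 / 2) * derivative p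
      + (C 4 * (X ^ 3 * derivative (derivative p)) - C g2 * (X * derivative (derivative p))
        - C g3 * derivative (derivative p)) := by
    simp only [RpolyStep, map_ofNat]
    ring
  rw [hexpand]
  rcases m with _ | _ | m <;>
    simp [coeff_X_pow_mul', coeff_X_mul, coeff_derivative] <;> ring

variable {g2 g3} {p : K[X]} {d : ℕ}

theorem natDegree_RpolyStep_le (hp : p.natDegree ≤ d + 1) :
    (RpolyStep g2 g3 p).natDegree ≤ d + 2 := by
  refine natDegree_le_iff_coeff_eq_zero.mpr fun m hm => ?_
  obtain ⟨k, rfl⟩ : ∃ k, m = k + 1 := Nat.exists_eq_add_one.mpr (by omega)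
  have hvanish (j : ℕ) (hj : d + 1 < j) : p.coeff j = 0 := coeff_eq_zero_of_natDegree_lt (by omega)
  rw [coeff_RpolyStep_succ, hvanish k (by omega), hvanish (k + 2) (by omega),
    hvanish (k + 3) (by omega)]
  ring

theorem coeff_RpolyStep_of_natDegree_le (hp : p.natDegree ≤ d + 1) :
    (RpolyStep g2 g3 p).coeff (d + 2) = (2 * d + 2) * (2 * d + 3) * p.coeff (d + 1) := by
  have hvanish (j : ℕ) (hj : d + 1 < j) : p.coeff j = 0 := coeff_eq_zero_of_natDegree_lt (by omega)
  rw [coeff_RpolyStep_succ, hvanish (d + 1 + 2) (by omega), hvanish (d + 1 + 3) (by omega)]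
  push_cast
  ring

theorem coeff_RpolyStep_eq_zero (hp : p.natDegree ≤ d + 1) (hd : p.coeff d = 0) :
    (RpolyStep g2 g3 p).coeff (d + 1) = 0 := by
  have hvanish (j : ℕ) (hj : d + 1 < j) : p.coeff j = 0 := coeff_eq_zero_of_natDegree_lt (by omega)
  rw [coeff_RpolyStep_succ, hd, hvanish (d + 2) (by omega), hvanish (d + 3) (by omega)]
  ring

end RpolyStep

theorem Rpoly_succ (g2 g3 : ℂ) (n : ℕ) : Rpoly g2 g3 (n + 1) = RpolyStep g2 g3 (Rpoly g2 g3 n) :=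
  rfl

/-- `R_n` has degree `n+1`, leading coefficient `(2n+1)!`, and vanishing coefficient
of `x^n`. -/
theorem Rpoly_degree_leading (g2 g3 : ℂ) (n : ℕ) :
    (Rpoly g2 g3 n).natDegree = n + 1 ∧
    (Rpoly g2 g3 n).coeff (n + 1) = (Nat.factorial (2*n + 1) : ℂ) ∧
    (Rpoly g2 g3 n).coeff n = 0 := by
  induction n with
  | zero => simp [Rpoly]
  | succ n ih =>
    obtain ⟨hdeg, hlead, hsub⟩ := ih
    have hle := natDegree_RpolyStep_le (g2 := g2) (g3 := g3) hdeg.le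
    have hlead' : (Rpoly g2 g3 (n + 1)).coeff (n + 2) = (Nat.factorial (2 * (n + 1) + 1) : ℂ) := by
      rw [Rpoly_succ, coeff_RpolyStep_of_natDegree_le hdeg.le, hlead,
        show 2 * (n + 1) + 1 = (2 * n + 1 + 1) + 1 by ring,
        Nat.factorial_succ (2 * n + 1 + 1), Nat.factorial_succ (2 * n + 1)]
      push_cast
      ring
    refine ⟨natDegree_eq_of_le_of_coeff_ne_zero hle ?_, hlead',
      coeff_RpolyStep_eq_zero hdeg.le hsub⟩
    rw [hlead']
    exact_mod_cast Nat.factorial_ne_zero _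
end

section
/- Let L be a pseudo-differential operator of the form ∂ + Σ_{j≥1} u_{j+1}∂^{-j} satisfying the Lax equations ∂L/∂t_n = [(Lⁿ)_{≥0}, L] for all n ≥ 2. Define L̃ = e^{ax} L e^{−ax} + a for a constant a. Then L̃ is again of the form ∂ + O(∂^{-1}), and after the change of time variables t_n ↦ Σ_{j≥n} binom(j,n) a^{j−n} t_j (with x ↦ x + Σ_{j≥2} j a^{j−1} t_j), L̃ satisfies the same Lax equations. -/
/-!
Conjugation by `e^{ax}` is an algebra automorphism commuting with `(·)_{≥0}`, and adding the
central constant `a` does not change any commutator. Expanding `L̃^m = (e^{ax}Le^{−ax} + a)^m`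
binomially, `[(L̃^m)_{≥0}, L̃]` becomes `Σ_n binom(m,n) a^{m−n} e^{ax}[(Lⁿ)_{≥0}, L]e^{−ax}`;
the `n = 0` term vanishes because `(L⁰)_{≥0} = 1`, and the others are the Lax flows of `L`.
-/

section

attribute [local instance] LieRing.ofAssociativeRing

variable {R A : Type*} [CommRing R] [Ring A] [Algebra R A]

theorem add_algebraMap_pow (x : A) (a : R) (m : ℕ) :
    (x + algebraMap R A a) ^ m
      = ∑ n ∈ Finset.range (m + 1), (m.choose n : R) • (a ^ (m - n) • x ^ n) := by
  rw [(Algebra.commute_algebraMap_right a x).add_pow]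
  refine Finset.sum_congr rfl fun n _ => ?_
  rw [Algebra.smul_def, Algebra.smul_def, map_natCast, map_pow,
    ← ((Algebra.commute_algebraMap_left a x).pow_pow _ _).eq]
  exact (Nat.cast_commute _ _).eq.symm

theorem lie_add_algebraMap (p x : A) (a : R) : ⁅p, x + algebraMap R A a⁆ = ⁅p, x⁆ := by
  rw [lie_add, commute_iff_lie_eq.mp (Algebra.commute_algebraMap_right a p), add_zero]

theorem lie_proj_pow_conj (proj : A →ₗ[R] A) (conj : A ≃ₐ[R] A)
    (hprojconj : ∀ P : A, proj (conj P) = conj (proj P)) (L : A) (n : ℕ) :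
    ⁅proj (conj L ^ n), conj L⁆ = conj ⁅proj (L ^ n), L⁆ := by
  rw [← map_pow, hprojconj]
  exact ((conj : A →ₐ[R] A).toLieHom.map_lie _ _).symm

end

/-- Galilean symmetry of the KP hierarchy, in the abstract algebra `E` of
pseudo-differential operators:  `proj` is the projection `(·)_{≥0}` onto the differential
operator part, `D` is `∂`, `conj` is the conjugation `P ↦ e^{ax} P e^{−ax}` (an algebra
automorphism commuting with `proj` and sending `∂` to `∂ − a`), and `Dt n` is `∂/∂t_n`.
If `L = ∂ + O(∂^{-1})` (i.e. `proj (L − ∂) = 0`) satisfies the Lax equations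
`∂L/∂t_n = [(Lⁿ)_{≥0}, L]`, then `L̃ = e^{ax} L e^{−ax} + a` is again of the form
`∂ + O(∂^{-1})`, and with respect to the new time variables
`t̃_m` (so that `∂/∂t̃_m = Σ_{n=1}^m binom(m,n) a^{m−n} ∂/∂t_n`, and `∂L̃/∂t_n` is
`e^{ax}(∂L/∂t_n)e^{−ax}`), it satisfies the same Lax equations. -/
theorem kp_hierarchy_galilean {E : Type*} [Ring E] [Algebra ℂ E]
    (proj : E →ₗ[ℂ] E) (D : E) (a : ℂ) (conj : E ≃ₐ[ℂ] E)
    (Dt : ℕ → E → E) (L : E)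
    (hproj1 : proj 1 = 1)
    (hprojconj : ∀ P : E, proj (conj P) = conj (proj P))
    (hconjD : conj D = D - algebraMap ℂ E a)
    (hform : proj (L - D) = 0)
    (hLax : ∀ n : ℕ, 1 ≤ n → Dt n L = proj (L ^ n) * L - L * proj (L ^ n)) :
    proj ((conj L + algebraMap ℂ E a) - D) = 0 ∧
    ∀ m : ℕ, 1 ≤ m →
      (∑ n ∈ Finset.Icc 1 m, (m.choose n : ℂ) • (a ^ (m - n) • conj (Dt n L)))
        = proj ((conj L + algebraMap ℂ E a) ^ m) * (conj L + algebraMap ℂ E a)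
          - (conj L + algebraMap ℂ E a) * proj ((conj L + algebraMap ℂ E a) ^ m) := by
  -- introduced inside the proof so that the statement is not elaborated through this Lie ring
  let _ : LieRing E := LieRing.ofAssociativeRing
  refine ⟨?_, fun m _ => ?_⟩
  · have hshift : conj L + algebraMap ℂ E a - D = conj (L - D) := by
      rw [map_sub, hconjD]
      abel
    rw [hshift, hprojconj, hform, map_zero]
  · have hLax' : ∀ n ∈ Finset.Icc 1 m, conj (Dt n L) = ⁅proj (conj L ^ n), conj L⁆ :=
      fun n hn => by
        rw [lie_proj_pow_conj proj conj hprojconj, hLax n (Finset.mem_Icc.mp hn).1, Ring.lie_def]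
    have hzero : ⁅proj (conj L ^ 0), conj L⁆ = 0 := by
      rw [pow_zero, hproj1]
      exact commute_iff_lie_eq.mp (Commute.one_left _)
    rw [← Ring.lie_def, lie_add_algebraMap, add_algebraMap_pow, map_sum, sum_lie,
      Nat.range_succ_eq_Icc_zero, ← Finset.insert_Icc_add_one_left_eq_Icc m.zero_le,
      Finset.sum_insert (by simp)]
    simp only [map_smul, smul_lie, hzero, smul_zero, zero_add]
    exact Finset.sum_congr rfl fun n hn => by rw [hLax' n hn]
end
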